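/- arXiv:0806.1818 — 3 statements merged into one kernel-verified Lean document; each statement's English description precedes it below -/
import Mathlib

section
/- Let w : L → ℝ and let y be a finitely supported function from the flats of M to ℝ with y ≥ 0 and a(y)_l ≥ w_l for all l ∈ L. Let S and T be flats with y_S > 0, y_T > 0, S ⊄ T and T ⊄ S, and let ε := min(y_S, y_T). Define y' := y + ε·(𝟙_{S∩T} + 𝟙_{cl(S∪T)} − 𝟙_S − 𝟙_T) (where 𝟙_F denotes the indicator of the flat F). Then y' ≥ 0, a(y')_l ≥ w_l for all l ∈ L, and r(y') ≤ r(y). -/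
/-!
Uncrossing moves weight `ε` off each of `S` and `T`, so `y'` stays nonnegative, and the rank
function is submodular, so `r(y)` does not increase. For the degrees it suffices that
`a(S)_l + a(T)_l ≤ a(S ∩ T)_l + a(cl(S ∪ T))_l`. This is elementary set bookkeeping except when
`l` meets `S` and `T` but not `S ∩ T`, say in `p ∈ S \ T` and `q ∈ T \ S`. Then `q` is not a
loop (the loops lie in the flat `S`) and `p ∉ cl {q} ⊆ T`, so `{p, q}` is independent, hence spans
the line `l` of rank at most two, and `l ⊆ cl(S ∪ T)`.
-/

open Set

variable {α : Type*}

/-- The rank of a set in a matroid: the supremum of the cardinalities of its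
independent subsets. -/
noncomputable def Matroid.rk' (M : Matroid α) (X : Set α) : ℕ :=
  sSup {n : ℕ | ∃ I, M.Indep I ∧ I ⊆ X ∧ I.ncard = n}

/-- A matroid is loopless if the closure of the empty set is empty. -/
def Matroid.Loopless' (M : Matroid α) : Prop := M.closure ∅ = ∅

/-- A line of a matroid: a subset of the ground set of rank 1 or 2. -/
def Matroid.IsLine (M : Matroid α) (l : Set α) : Prop :=
  l ⊆ M.E ∧ (M.rk' l = 1 ∨ M.rk' l = 2)

open scoped Classical in
/-- Degree `a(X)_l` of a set `X` at a line `l`. -/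
noncomputable def deg (X l : Set α) : ℕ :=
  if X ∩ l = ∅ then 0 else if l ⊆ X then 2 else 1

/-- A fractional matching of the pair `(M, L)`. -/
def IsFracMatching (M : Matroid α) (L : Finset (Set α)) (x : Set α → ℝ) : Prop :=
  (∀ l ∈ L, 0 ≤ x l) ∧
  ∀ F : Set α, M.IsFlat F → ∑ l ∈ L, (deg F l : ℝ) * x l ≤ (M.rk' F : ℝ)

/-- `a(y)_l` for a finitely supported `y` on flats. -/
noncomputable def aDual (y : Set α →₀ ℝ) (l : Set α) : ℝ :=
  y.sum fun F c => c * (deg F l : ℝ)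

/-- `r(y)` for a finitely supported `y` on flats. -/
noncomputable def rDual (M : Matroid α) (y : Set α →₀ ℝ) : ℝ :=
  y.sum fun F c => c * (M.rk' F : ℝ)

open scoped Classical in
lemma deg_of_inter_nonempty {X l : Set α} (h : (X ∩ l).Nonempty) :
    deg X l = if l ⊆ X then 2 else 1 := by
  simp [deg, h.ne_empty]

lemma deg_eq_zero_of_inter_eq_empty {X l : Set α} (h : X ∩ l = ∅) : deg X l = 0 := by
  classical
  simp [deg, h]

lemma deg_mono {X Y : Set α} (hXY : X ⊆ Y) (l : Set α) : deg X l ≤ deg Y l := by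
  rcases (X ∩ l).eq_empty_or_nonempty with hX | hX
  · simp [deg_eq_zero_of_inter_eq_empty hX]
  have hY : (Y ∩ l).Nonempty := hX.mono (inter_subset_inter_left l hXY)
  rw [deg_of_inter_nonempty hX, deg_of_inter_nonempty hY]
  by_cases hlX : l ⊆ X
  · simp [hlX, hlX.trans hXY]
  · split_ifs <;> simp

lemma deg_add_deg_le_deg_inter_add {S T U l : Set α} (hSU : S ⊆ U) (hTU : T ⊆ U)
    (hcross : ∀ p ∈ S \ T, ∀ q ∈ T \ S, p ∈ l → q ∈ l → l ⊆ U) :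
    deg S l + deg T l ≤ deg (S ∩ T) l + deg U l := by
  rcases (S ∩ l).eq_empty_or_nonempty with hS | ⟨p, hpS, hpl⟩
  · have := deg_mono hTU l
    rw [deg_eq_zero_of_inter_eq_empty hS]
    omega
  rcases (T ∩ l).eq_empty_or_nonempty with hT | ⟨q, hqT, hql⟩
  · have := deg_mono hSU l
    rw [deg_eq_zero_of_inter_eq_empty hT]
    omega
  rw [deg_of_inter_nonempty ⟨p, hpS, hpl⟩, deg_of_inter_nonempty ⟨q, hqT, hql⟩]
  rcases (S ∩ T ∩ l).eq_empty_or_nonempty with hST | hST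
  · have hpT : p ∉ T := fun h => hST.subset ⟨⟨hpS, h⟩, hpl⟩
    have hqS : q ∉ S := fun h => hST.subset ⟨⟨h, hqT⟩, hql⟩
    have hlU := hcross p ⟨hpS, hpT⟩ q ⟨hqT, hqS⟩ hpl hql
    rw [deg_of_inter_nonempty ⟨p, hSU hpS, hpl⟩, if_pos hlU, if_neg (fun h => hqS (h hql)),
      if_neg (fun h => hpT (h hpl))]
    omega
  rw [deg_of_inter_nonempty hST, deg_of_inter_nonempty (hST.mono (inter_subset_inter_left l
    (inter_subset_left.trans hSU)))]
  by_cases hlS : l ⊆ S <;> by_cases hlT : l ⊆ T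
  · rw [if_pos hlS, if_pos hlT, if_pos (subset_inter hlS hlT), if_pos (hlS.trans hSU)]
  · rw [if_pos hlS, if_neg hlT, if_pos (hlS.trans hSU)]
    split_ifs <;> omega
  · rw [if_neg hlS, if_pos hlT, if_pos (hlT.trans hTU)]
    split_ifs <;> omega
  · rw [if_neg hlS, if_neg hlT]
    split_ifs <;> omega

namespace Matroid

variable {M : Matroid α} [M.RankFinite] {S T l : Set α}

lemma cast_rk'_eq_eRk (X : Set α) : (M.rk' X : ℕ∞) = M.eRk X := by
  obtain ⟨I, hI⟩ := M.exists_isBasis' X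
  have hmax : IsGreatest {n : ℕ | ∃ J, M.Indep J ∧ J ⊆ X ∧ J.ncard = n} I.ncard := by
    refine ⟨⟨I, hI.indep, hI.subset, rfl⟩, ?_⟩
    rintro _ ⟨J, hJ, hJX, rfl⟩
    have h := hJ.encard_le_eRk_of_subset hJX
    rw [← hI.encard_eq_eRk, ← hJ.finite.cast_ncard_eq, ← hI.indep.finite.cast_ncard_eq] at h
    exact_mod_cast h
  rw [rk', hmax.csSup_eq, hI.indep.finite.cast_ncard_eq, hI.encard_eq_eRk]

lemma rk'_inter_add_rk'_closure_union_le (S T : Set α) :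
    M.rk' (S ∩ T) + M.rk' (M.closure (S ∪ T)) ≤ M.rk' S + M.rk' T := by
  have h := M.eRk_inter_add_eRk_union_le S T
  rw [← M.eRk_closure_eq (S ∪ T)] at h
  simp only [← cast_rk'_eq_eRk] at h
  exact_mod_cast h

lemma IsLine.eRk_le_two (hl : M.IsLine l) : M.eRk l ≤ 2 := by
  rw [← cast_rk'_eq_eRk]
  rcases hl.2 with h | h <;> simp [h]

lemma IsLine.subset_closure_union (hl : M.IsLine l) (hS : M.IsFlat S)
    (hT : M.IsFlat T) {p q : α} (hp : p ∈ S \ T) (hq : q ∈ T \ S) (hpl : p ∈ l) (hql : q ∈ l) :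
    l ⊆ M.closure (S ∪ T) := by
  have hq_nonloop : M.IsNonloop q :=
    isNonloop_iff_mem_compl_loops.2 ⟨hl.1 hql, fun h => hq.2 (hS.loops_subset h)⟩
  have hp_notMem : p ∉ M.closure {q} := fun h =>
    hp.2 (hT.closure ▸ M.closure_subset_closure (singleton_subset_iff.2 hq.1) h)
  have hpq_ne : p ≠ q := fun h => hq.2 (h ▸ hp.1)
  have hpq : M.Indep {p, q} :=
    (hq_nonloop.indep.insert_indep_iff_of_notMem hpq_ne).2 ⟨hl.1 hpl, hp_notMem⟩
  have hbasis : M.IsBasis' {p, q} l :=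
    hpq.isBasis'_of_eRk_ge (toFinite _) (pair_subset hpl hql)
      (by rw [hpq.eRk_eq_encard, encard_pair hpq_ne]; exact hl.eRk_le_two)
  calc l ⊆ M.closure l := M.subset_closure l hl.1
    _ = M.closure {p, q} := hbasis.closure_eq_closure.symm
    _ ⊆ M.closure (S ∪ T) := M.closure_subset_closure (pair_subset (Or.inl hp.1) (Or.inr hq.1))

lemma IsLine.deg_add_deg_le_deg_inter_add_closure (hl : M.IsLine l) (hS : M.IsFlat S)
    (hT : M.IsFlat T) :
    deg S l + deg T l ≤ deg (S ∩ T) l + deg (M.closure (S ∪ T)) l :=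
  have hSTE : S ∪ T ⊆ M.E := union_subset hS.subset_ground hT.subset_ground
  deg_add_deg_le_deg_inter_add (M.subset_closure_of_subset subset_union_left hSTE)
    (M.subset_closure_of_subset subset_union_right hSTE)
    (fun _ hp _ hq hpl hql => hl.subset_closure_union hS hT hp hq hpl hql)

end Matroid

section Uncrossing

open Finsupp

variable {β : Type*}

lemma sum_mul_add_smul_single_add_single_sub (f : β → ℝ) (y : β →₀ ℝ) (ε : ℝ) (A B C D : β) :
    (y + ε • (single A 1 + single B 1 - single C 1 - single D 1)).sum (fun F c => c * f F)
      = y.sum (fun F c => c * f F) + ε * (f A + f B - f C - f D) := by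
  have h (z : β →₀ ℝ) : z.sum (fun F c => c * f F) = linearCombination ℝ f z := by
    simp [linearCombination_apply]
  simp only [h, map_add, map_sub, map_smul, linearCombination_single, smul_eq_mul]
  ring

lemma add_smul_single_add_single_sub_nonneg {y : β →₀ ℝ} (hy : ∀ F, 0 ≤ y F) {ε : ℝ}
    (hε : 0 ≤ ε) {S T : β} (hST : S ≠ T) (hεS : ε ≤ y S) (hεT : ε ≤ y T) (A B F : β) :
    0 ≤ (y + ε • (single A 1 + single B 1 - single S 1 - single T 1) : β →₀ ℝ) F := by
  classical
  simp only [coe_add, coe_smul, coe_sub, Pi.add_apply, Pi.smul_apply, Pi.sub_apply,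
    single_apply, smul_eq_mul]
  have := hy F
  split_ifs <;> subst_vars <;> first | exact absurd rfl hST | linarith

end Uncrossing

theorem stmt_2_general (M : Matroid α) [M.RankFinite]
    (L : Finset (Set α)) (hL : ∀ l ∈ L, M.IsLine l)
    (w : Set α → ℝ) (y : Set α →₀ ℝ)
    (hy0 : ∀ F, 0 ≤ y F)
    (hyw : ∀ l ∈ L, w l ≤ aDual y l)
    (S T : Set α) (hS : M.IsFlat S) (hT : M.IsFlat T)
    (hST : ¬ S ⊆ T)
    (ε : ℝ) (hε : ε = min (y S) (y T))
    (y' : Set α →₀ ℝ)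
    (hy' : y' = y + ε • (Finsupp.single (S ∩ T) (1 : ℝ)
        + Finsupp.single (M.closure (S ∪ T)) (1 : ℝ)
        - Finsupp.single S (1 : ℝ) - Finsupp.single T (1 : ℝ))) :
    (∀ F, 0 ≤ y' F) ∧ (∀ l ∈ L, w l ≤ aDual y' l) ∧ rDual M y' ≤ rDual M y := by
  have hε0 : 0 ≤ ε := hε ▸ le_min (hy0 S) (hy0 T)
  subst hy'
  refine ⟨add_smul_single_add_single_sub_nonneg hy0 hε0 (fun h => hST h.subset)
    (hε ▸ min_le_left _ _) (hε ▸ min_le_right _ _) _ _, fun l hl => ?_, ?_⟩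
  · have hdeg : (deg S l : ℝ) + deg T l ≤ deg (S ∩ T) l + deg (M.closure (S ∪ T)) l := by
      exact_mod_cast (hL l hl).deg_add_deg_le_deg_inter_add_closure hS hT
    have hgain := mul_nonneg hε0 (sub_nonneg.2 hdeg)
    have hyl := hyw l hl
    rw [aDual] at hyl ⊢
    rw [sum_mul_add_smul_single_add_single_sub]
    linarith
  · have hrk : (M.rk' (S ∩ T) : ℝ) + M.rk' (M.closure (S ∪ T)) ≤ M.rk' S + M.rk' T := by
      exact_mod_cast M.rk'_inter_add_rk'_closure_union_le S T
    have hloss := mul_nonneg hε0 (sub_nonneg.2 hrk)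
    rw [rDual, rDual, sum_mul_add_smul_single_add_single_sub]
    linarith

/-- uncrossing two flats in the support of a feasible dual solution
preserves nonnegativity and feasibility and does not increase the dual value. -/
theorem stmt_2 (M : Matroid α) [M.RankFinite] (hM : M.Loopless')
    (L : Finset (Set α)) (hL : ∀ l ∈ L, M.IsLine l)
    (w : Set α → ℝ) (y : Set α →₀ ℝ)
    (hy0 : ∀ F, 0 ≤ y F) (hyflat : ∀ F ∈ y.support, M.IsFlat F)
    (hyw : ∀ l ∈ L, w l ≤ aDual y l)
    (S T : Set α) (hS : M.IsFlat S) (hT : M.IsFlat T)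
    (hyS : 0 < y S) (hyT : 0 < y T) (hST : ¬ S ⊆ T) (hTS : ¬ T ⊆ S)
    (ε : ℝ) (hε : ε = min (y S) (y T))
    (y' : Set α →₀ ℝ)
    (hy' : y' = y + ε • (Finsupp.single (S ∩ T) (1 : ℝ)
        + Finsupp.single (M.closure (S ∪ T)) (1 : ℝ)
        - Finsupp.single S (1 : ℝ) - Finsupp.single T (1 : ℝ))) :
    (∀ F, 0 ≤ y' F) ∧ (∀ l ∈ L, w l ≤ aDual y' l) ∧ rDual M y' ≤ rDual M y :=
  stmt_2_general M L hL w y hy0 hyw S T hS hT hST ε hε y' hy'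
end

section
/- Let ∅ = F_0 ⊂ F_1 ⊂ ⋯ ⊂ F_k ⊂ F_{k+1} = E be a chain of flats of M. For i = 0,…,k let S_i ⊆ F_{i+1} \ F_i be such that S_i ∪ F_i is a flat of M, and set S := S_0 ∪ ⋯ ∪ S_k. Then for every line l ∈ L, a(S)_l = ∑_{i=0}^{k} (a(S_i ∪ F_i)_l − a(F_i)_l). -/
open Set

variable {α : Type*}

/-!
Let `l` be a line. In a loopless matroid, if a flat `A` meets `l` and a flat `B ⊇ A`
contains a point of `l` outside `A`, then `l ⊆ B`: the two points are independent and span the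
rank-`≤ 2` set `l`. Hence for flats `F` and `S ∪ F` with `S ∩ F = ∅` the degree is additive,
`a(S ∪ F)_l = a(S)_l + a(F)_l`, so the `i`-th summand equals `a(S_i)_l`. Applying the same fact
along `F_i ⊆ S_i ∪ F_i ⊆ F_j ⊆ S_j ∪ F_j` shows that if `S_i` and `S_j` (`i < j`) both meet `l`
then `l ⊆ S_i ∪ S_j`. For pairwise disjoint sets with this property the degree of the union is
the sum of the degrees, by induction on the number of sets.
-/

section deg

variable {X Y l : Set α}

lemma deg_eq_zero (h : X ∩ l = ∅) : deg X l = 0 := by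
  simp [deg, h]

lemma deg_eq_one (hXl : (X ∩ l).Nonempty) (hlX : ¬ l ⊆ X) : deg X l = 1 := by
  simp [deg, hXl.ne_empty, hlX]

lemma deg_eq_two (hlX : l ⊆ X) (hl : l.Nonempty) : deg X l = 2 := by
  simp [deg, (inter_eq_right.2 hlX).symm ▸ hl.ne_empty, hlX]

lemma deg_congr (h : X ∩ l = Y ∩ l) : deg X l = deg Y l := by
  simp only [deg, h, ← inter_eq_right (s := X), ← inter_eq_right (s := Y)]

lemma deg_union_of_disjoint (hXY : Disjoint X Y)
    (hcover : (X ∩ l).Nonempty → (Y ∩ l).Nonempty → l ⊆ X ∪ Y) :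
    deg (X ∪ Y) l = deg X l + deg Y l := by
  rcases eq_empty_or_nonempty (X ∩ l) with hX | hX
  · rw [deg_eq_zero hX, zero_add]
    exact deg_congr (by rw [union_inter_distrib_right, hX, empty_union])
  rcases eq_empty_or_nonempty (Y ∩ l) with hY | hY
  · rw [deg_eq_zero hY, add_zero]
    exact deg_congr (by rw [union_inter_distrib_right, hY, union_empty])
  obtain ⟨x, hxX, hxl⟩ := hX
  obtain ⟨y, hyY, hyl⟩ := hY
  rw [deg_eq_two (hcover ⟨x, hxX, hxl⟩ ⟨y, hyY, hyl⟩) ⟨x, hxl⟩,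
    deg_eq_one ⟨x, hxX, hxl⟩ fun h ↦ hXY.notMem_of_mem_right hyY (h hyl),
    deg_eq_one ⟨y, hyY, hyl⟩ fun h ↦ hXY.notMem_of_mem_left hxX (h hxl)]

lemma deg_biUnion_eq_sum {ι : Type*} [DecidableEq ι] (s : Finset ι) (S : ι → Set α)
    (hdisj : (s : Set ι).PairwiseDisjoint S)
    (hcover : ∀ i ∈ s, ∀ j ∈ s, i ≠ j → (S i ∩ l).Nonempty → (S j ∩ l).Nonempty →
      l ⊆ S i ∪ S j) :
    deg (⋃ i ∈ s, S i) l = ∑ i ∈ s, deg (S i) l := by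
  induction s using Finset.induction_on with
  | empty => simp [deg_eq_zero]
  | insert a s has ih =>
    rw [Finset.set_biUnion_insert, Finset.sum_insert has,
      ← ih (hdisj.subset (by simp)) fun i hi j hj ↦
        hcover i (by simp [hi]) j (by simp [hj])]
    refine deg_union_of_disjoint ?_ fun ha hs ↦ ?_
    · refine disjoint_iUnion₂_right.2 fun i hi ↦ hdisj (by simp) (by simp [hi]) ?_
      rintro rfl; exact has hi
    · obtain ⟨x, hx, hxl⟩ := hs
      obtain ⟨j, hj, hxj⟩ := mem_iUnion₂.1 hx
      refine (hcover a (by simp) j (by simp [hj]) (by rintro rfl; exact has hj) ha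
        ⟨x, hxj, hxl⟩).trans (union_subset_union_right _ ?_)
      exact subset_biUnion_of_mem (u := S) hj

end deg

namespace Matroid

variable {M : Matroid α} {l A B F G S T : Set α}

lemma IsLine.ncard_le_two {I : Set α} (hl : M.IsLine l) (hI : M.Indep I) (hIl : I ⊆ l) :
    I.ncard ≤ 2 := by
  have hbdd : BddAbove {n : ℕ | ∃ J, M.Indep J ∧ J ⊆ l ∧ J.ncard = n} := by
    by_contra h
    -- an unbounded set of naturals has `sSup` equal to `0`, but `rk' l ≠ 0`
    have : M.rk' l = 0 := by rw [rk', csSup_of_not_bddAbove h, csSup_empty]; rfl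
    rcases hl.2 with h' | h' <;> omega
  have : I.ncard ≤ M.rk' l := le_csSup hbdd ⟨I, hI, hIl, rfl⟩
  rcases hl.2 with h | h <;> omega

lemma IsLine.subset_of_isFlat (hM : M.Loopless') (hl : M.IsLine l) (hA : M.IsFlat A)
    (hB : M.IsFlat B) (hAB : A ⊆ B) (hAl : (A ∩ l).Nonempty) (hBl : (B \ A ∩ l).Nonempty) :
    l ⊆ B := by
  obtain ⟨e, heA, hel⟩ := hAl
  obtain ⟨f, ⟨hfB, hfA⟩, hfl⟩ := hBl
  have he : M.IsNonloop e :=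
    isNonloop_of_not_isLoop (hl.1 hel) fun h ↦ by rwa [IsLoop, loops, hM] at h
  have hfe : f ∉ M.closure {e} := fun h ↦
    hfA ((M.closure_subset_closure (singleton_subset_iff.2 heA)).trans hA.closure.subset h)
  have hI : M.Indep {f, e} :=
    (indep_singleton.2 he).insert_indep_iff.2 (Or.inl ⟨hl.1 hfl, hfe⟩)
  intro x hxl
  by_contra hxB
  have hx : x ∉ M.closure {f, e} := fun h ↦
    hxB ((M.closure_subset_closure (pair_subset hfB (hAB heA))).trans hB.closure.subset h)
  have hI' : M.Indep {x, f, e} := hI.insert_indep_iff.2 (Or.inl ⟨hl.1 hxl, hx⟩)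
  have hcard : ({x, f, e} : Set α).ncard = 3 := by
    refine ncard_eq_three.2 ⟨x, f, e, ?_, ?_, ?_, rfl⟩
    · rintro rfl; exact hx (M.mem_closure_of_mem (mem_insert _ _) hI.subset_ground)
    · rintro rfl; exact hx (M.mem_closure_of_mem (by simp) hI.subset_ground)
    · rintro rfl; exact hfe (M.mem_closure_of_mem rfl (singleton_subset_iff.2 he.mem_ground))
  have := hl.ncard_le_two hI' (insert_subset hxl (pair_subset hfl hel))
  omega

lemma IsLine.deg_union_of_isFlat (hM : M.Loopless') (hl : M.IsLine l) (hF : M.IsFlat F)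
    (hSF : M.IsFlat (S ∪ F)) (hdisj : Disjoint S F) :
    deg (S ∪ F) l = deg S l + deg F l := by
  refine deg_union_of_disjoint hdisj fun ⟨s, hsS, hsl⟩ hFl ↦ ?_
  exact hl.subset_of_isFlat hM hF hSF subset_union_right hFl
    ⟨s, ⟨Or.inl hsS, hdisj.notMem_of_mem_left hsS⟩, hsl⟩

lemma IsLine.subset_union_of_isFlat (hM : M.Loopless') (hl : M.IsLine l) (hF : M.IsFlat F)
    (hSF : M.IsFlat (S ∪ F)) (hG : M.IsFlat G) (hTG : M.IsFlat (T ∪ G))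
    (hSFG : S ∪ F ⊆ G) (hdisjS : Disjoint S F) (hdisjT : Disjoint T G)
    (hSl : (S ∩ l).Nonempty) (hTl : (T ∩ l).Nonempty) : l ⊆ S ∪ T := by
  obtain ⟨s, hsS, hsl⟩ := hSl
  obtain ⟨t, htT, htl⟩ := hTl
  have hlG : ¬ l ⊆ G := fun h ↦ hdisjT.notMem_of_mem_left htT (h htl)
  have hFl : F ∩ l = ∅ := by
    refine not_nonempty_iff_eq_empty.1 fun hFl ↦ hlG ?_
    exact (hl.subset_of_isFlat hM hF hSF subset_union_right hFl
      ⟨s, ⟨Or.inl hsS, hdisjS.notMem_of_mem_left hsS⟩, hsl⟩).trans hSFG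
  have hGl : G ∩ l ⊆ S ∪ F := fun y hy ↦ by
    by_contra hyS
    exact hlG (hl.subset_of_isFlat hM hSF hG hSFG ⟨s, Or.inl hsS, hsl⟩ ⟨y, ⟨hy.1, hyS⟩, hy.2⟩)
  have hlTG : l ⊆ T ∪ G := hl.subset_of_isFlat hM hG hTG subset_union_right
    ⟨s, hSFG (Or.inl hsS), hsl⟩ ⟨t, ⟨Or.inl htT, hdisjT.notMem_of_mem_left htT⟩, htl⟩
  intro x hx
  rcases hlTG hx with hxT | hxG
  · exact Or.inr hxT
  rcases hGl ⟨hxG, hx⟩ with hxS | hxF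
  · exact Or.inl hxS
  · exact absurd (hFl ▸ ⟨hxF, hx⟩ : x ∈ (∅ : Set α)) (notMem_empty x)

end Matroid

theorem stmt_6_general (M : Matroid α) (hM : M.Loopless')
    (L : Finset (Set α)) (hL : ∀ l ∈ L, M.IsLine l)
    (k : ℕ) (F : ℕ → Set α)
    (hFflat : ∀ i ≤ k+1, M.IsFlat (F i)) (hFmono : ∀ i ≤ k, F i ⊂ F (i+1))
    (S : ℕ → Set α)
    (hS : ∀ i ≤ k, S i ⊆ F (i+1) \ F i ∧ M.IsFlat (S i ∪ F i)) :
    ∀ l ∈ L, (deg (⋃ i ∈ Finset.range (k+1), S i) l : ℤ)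
      = ∑ i ∈ Finset.range (k+1), ((deg (S i ∪ F i) l : ℤ) - (deg (F i) l : ℤ)) := by
  intro l hl
  have hdisj : ∀ i ≤ k, Disjoint (S i) (F i) := fun i hi ↦
    disjoint_of_subset_left (hS i hi).1 disjoint_sdiff_left
  have hmono : MonotoneOn F (Iic (k + 1)) := monotoneOn_of_le_add_one ordConnected_Iic
    fun i _ _ hi ↦ (hFmono i (by simpa using hi)).subset
  have hchain : ∀ i j, i < j → j ≤ k + 1 → S i ∪ F i ⊆ F j := fun i j hij hj ↦
    union_subset ((hS i (by omega)).1.trans (sdiff_subset.trans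
      (hmono (mem_Iic.2 (by omega)) hj hij))) (hmono (mem_Iic.2 (by omega)) hj hij.le)
  have hpair : ∀ i j, i < j → j ≤ k → Disjoint (S i) (S j) ∧
      ((S i ∩ l).Nonempty → (S j ∩ l).Nonempty → l ⊆ S i ∪ S j) := fun i j hij hj ↦
    ⟨(hdisj j hj).symm.mono_left (subset_union_left.trans (hchain i j hij (by omega))),
      (hL l hl).subset_union_of_isFlat hM (hFflat i (by omega)) (hS i (by omega)).2
        (hFflat j (by omega)) (hS j hj).2 (hchain i j hij (by omega)) (hdisj i (by omega))
        (hdisj j hj)⟩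
  have hterm : ∀ i ∈ Finset.range (k + 1),
      (deg (S i ∪ F i) l : ℤ) - (deg (F i) l : ℤ) = deg (S i) l := fun i hi ↦ by
    have hi : i ≤ k := Finset.mem_range_succ_iff.1 hi
    rw [(hL l hl).deg_union_of_isFlat hM (hFflat i (by omega)) (hS i hi).2 (hdisj i hi)]
    push_cast; ring
  rw [Finset.sum_congr rfl hterm, ← Nat.cast_sum, deg_biUnion_eq_sum]
  all_goals
    intro i hi j hj hij
    simp only [Finset.coe_range, mem_Iio, Finset.mem_range, Nat.lt_succ_iff] at hi hj
  · rcases hij.lt_or_gt with hij | hij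
    exacts [(hpair i j hij hj).1, (hpair j i hij hi).1.symm]
  · rcases hij.lt_or_gt with hij | hij
    exacts [(hpair i j hij hj).2,
      fun hil hjl ↦ union_comm (S j) (S i) ▸ (hpair j i hij hi).2 hjl hil]

/-- degree decomposition along a chain of flats. -/
theorem stmt_6 (M : Matroid α) [M.RankFinite] (hM : M.Loopless')
    (L : Finset (Set α)) (hL : ∀ l ∈ L, M.IsLine l)
    (k : ℕ) (F : ℕ → Set α) (hF0 : F 0 = ∅) (hFE : F (k+1) = M.E)
    (hFflat : ∀ i ≤ k+1, M.IsFlat (F i)) (hFmono : ∀ i ≤ k, F i ⊂ F (i+1))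
    (S : ℕ → Set α)
    (hS : ∀ i ≤ k, S i ⊆ F (i+1) \ F i ∧ M.IsFlat (S i ∪ F i)) :
    ∀ l ∈ L, (deg (⋃ i ∈ Finset.range (k+1), S i) l : ℤ)
      = ∑ i ∈ Finset.range (k+1), ((deg (S i ∪ F i) l : ℤ) - (deg (F i) l : ℤ)) :=
  stmt_6_general M hM L hL k F hFflat hFmono S hS
end

section
/- Let w : L → ℝ with w ≥ 0, let F_1 ⊂ ⋯ ⊂ F_k be a chain of flats of M with F_k ⊊ E, let λ_1,…,λ_k ≥ 0 and λ ∈ ℝ, and set y := λ_1·𝟙_{F_1} + ⋯ + λ_k·𝟙_{F_k} + λ·𝟙_E with a(y)_l ≥ w_l for all l ∈ L. Let x be a perfect fractional matching such that w_l = a(y)_l for every l ∈ L with x_l > 0, and ∑_{l∈L} a(F_i)_l x_l = r(F_i) for every i = 1,…,k. Then ∑_{l∈L} w_l x_l = r(y), and x is a maximum weight perfect fractional matching: ∑_{l∈L} w_l x'_l ≤ ∑_{l∈L} w_l x_l for every perfect fractional matching x'. -/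
/-! Weak LP duality: for a perfect fractional matching `x'` and the dual solution `y`,
`∑ w_l x'_l ≤ ∑ a(y)_l x'_l = ∑_F y_F ∑ a(F)_l x'_l ≤ r(y)`. The last step needs `y_F ≥ 0` for the
flats `F_i` only, because on `E` every line has degree 2 and perfectness gives `2 ∑ x'_l = r(E)`.
For `x`, complementary slackness turns both inequalities into equalities. -/

open Set

variable {α : Type*}

open Finset

variable {ι : Type*}

lemma Matroid.rk'_empty (M : Matroid α) : M.rk' ∅ = 0 := by
  have hsingle : {n : ℕ | ∃ I, M.Indep I ∧ I ⊆ ∅ ∧ I.ncard = n} = {0} := by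
    ext n
    constructor
    · rintro ⟨I, -, hI, rfl⟩
      simp [Set.subset_empty_iff.mp hI]
    · rintro rfl
      exact ⟨∅, M.empty_indep, le_rfl, Set.ncard_empty _⟩
  rw [Matroid.rk', hsingle, csSup_singleton]

lemma Matroid.IsLine.nonempty {M : Matroid α} {l : Set α} (h : M.IsLine l) : l.Nonempty := by
  rw [Set.nonempty_iff_ne_empty]
  rintro rfl
  rcases h.2 with h2 | h2 <;> simp [M.rk'_empty] at h2

lemma Matroid.IsLine.deg_ground {M : Matroid α} {l : Set α} (h : M.IsLine l) :
    deg M.E l = 2 := by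
  rw [deg, Set.inter_eq_right.mpr h.1, if_neg h.nonempty.ne_empty, if_pos h.1]

lemma sum_deg_ground_mul {M : Matroid α} {L : Finset (Set α)} (hL : ∀ l ∈ L, M.IsLine l)
    (z : Set α → ℝ) : ∑ l ∈ L, (deg M.E l : ℝ) * z l = 2 * ∑ l ∈ L, z l := by
  rw [mul_sum]
  refine sum_congr rfl fun l hl => ?_
  rw [(hL l hl).deg_ground]
  norm_num

lemma sum_dual_mul {M : Matroid α} {L : Finset (Set α)} (hL : ∀ l ∈ L, M.IsLine l)
    (s : Finset ι) (c : ι → ℝ) (G : ι → Set α) (μ : ℝ) (z : Set α → ℝ) :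
    ∑ l ∈ L, (∑ i ∈ s, c i * (deg (G i) l : ℝ) + μ * (deg M.E l : ℝ)) * z l =
      ∑ i ∈ s, c i * ∑ l ∈ L, (deg (G i) l : ℝ) * z l + μ * (2 * ∑ l ∈ L, z l) := by
  rw [← sum_deg_ground_mul hL z]
  simp only [add_mul, sum_add_distrib, sum_mul, mul_sum, mul_assoc]
  rw [sum_comm]

lemma IsFracMatching.sum_mul_le_dual {M : Matroid α} {L : Finset (Set α)}
    (hL : ∀ l ∈ L, M.IsLine l) {x : Set α → ℝ} (hx : IsFracMatching M L x)
    (hperf : 2 * ∑ l ∈ L, x l = (M.rk' M.E : ℝ)) {s : Finset ι} {c : ι → ℝ} {G : ι → Set α}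
    (hG : ∀ i ∈ s, M.IsFlat (G i)) (hc : ∀ i ∈ s, 0 ≤ c i) {μ : ℝ} {w : Set α → ℝ}
    (hw : ∀ l ∈ L, w l ≤ ∑ i ∈ s, c i * (deg (G i) l : ℝ) + μ * (deg M.E l : ℝ)) :
    ∑ l ∈ L, w l * x l ≤ ∑ i ∈ s, c i * (M.rk' (G i) : ℝ) + μ * (M.rk' M.E : ℝ) :=
  calc ∑ l ∈ L, w l * x l
      ≤ ∑ l ∈ L, (∑ i ∈ s, c i * (deg (G i) l : ℝ) + μ * (deg M.E l : ℝ)) * x l :=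
        sum_le_sum fun l hl => mul_le_mul_of_nonneg_right (hw l hl) (hx.1 l hl)
    _ = ∑ i ∈ s, c i * ∑ l ∈ L, (deg (G i) l : ℝ) * x l + μ * (2 * ∑ l ∈ L, x l) :=
        sum_dual_mul hL s c G μ x
    _ ≤ ∑ i ∈ s, c i * (M.rk' (G i) : ℝ) + μ * (M.rk' M.E : ℝ) := by
        rw [hperf]
        gcongr with i hi
        · exact hc i hi
        · exact hx.2 (G i) (hG i hi)

lemma sum_mul_eq_dual_of_slackness {M : Matroid α} {L : Finset (Set α)}
    (hL : ∀ l ∈ L, M.IsLine l) {x : Set α → ℝ} (hx : ∀ l ∈ L, 0 ≤ x l)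
    (hperf : 2 * ∑ l ∈ L, x l = (M.rk' M.E : ℝ)) {s : Finset ι} {c : ι → ℝ} {G : ι → Set α}
    {μ : ℝ} {w : Set α → ℝ}
    (hw : ∀ l ∈ L, 0 < x l → w l = ∑ i ∈ s, c i * (deg (G i) l : ℝ) + μ * (deg M.E l : ℝ))
    (htight : ∀ i ∈ s, ∑ l ∈ L, (deg (G i) l : ℝ) * x l = (M.rk' (G i) : ℝ)) :
    ∑ l ∈ L, w l * x l = ∑ i ∈ s, c i * (M.rk' (G i) : ℝ) + μ * (M.rk' M.E : ℝ) := by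
  have hsupp : ∑ l ∈ L, w l * x l =
      ∑ l ∈ L, (∑ i ∈ s, c i * (deg (G i) l : ℝ) + μ * (deg M.E l : ℝ)) * x l := by
    refine sum_congr rfl fun l hl => ?_
    rcases (hx l hl).eq_or_lt with h | h
    · simp [← h]
    · rw [hw l hl h]
  rw [hsupp, sum_dual_mul hL, hperf]
  congr 1
  exact sum_congr rfl fun i hi => by rw [htight i hi]

theorem stmt_12_general (M : Matroid α)
    (L : Finset (Set α)) (hL : ∀ l ∈ L, M.IsLine l)
    (w : Set α → ℝ)
    (k : ℕ) (F : ℕ → Set α)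
    (hFflat : ∀ i, 1 ≤ i → i ≤ k → M.IsFlat (F i))
    (lam : ℕ → ℝ) (hlam : ∀ i, 1 ≤ i → i ≤ k → 0 ≤ lam i) (μ : ℝ)
    (hfeas : ∀ l ∈ L, w l ≤
      ∑ i ∈ Finset.Icc 1 k, lam i * (deg (F i) l : ℝ) + μ * (deg M.E l : ℝ))
    (x : Set α → ℝ) (hx : IsFracMatching M L x)
    (hperf : 2 * ∑ l ∈ L, x l = (M.rk' M.E : ℝ))
    (hcs1 : ∀ l ∈ L, 0 < x l → w l =
      ∑ i ∈ Finset.Icc 1 k, lam i * (deg (F i) l : ℝ) + μ * (deg M.E l : ℝ))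
    (hcs2 : ∀ i, 1 ≤ i → i ≤ k →
      ∑ l ∈ L, (deg (F i) l : ℝ) * x l = (M.rk' (F i) : ℝ)) :
    ∑ l ∈ L, w l * x l =
      (∑ i ∈ Finset.Icc 1 k, lam i * (M.rk' (F i) : ℝ) + μ * (M.rk' M.E : ℝ)) ∧
    ∀ x' : Set α → ℝ, IsFracMatching M L x' →
      2 * ∑ l ∈ L, x' l = (M.rk' M.E : ℝ) →
      ∑ l ∈ L, w l * x' l ≤ ∑ l ∈ L, w l * x l := by
  have hvalue := sum_mul_eq_dual_of_slackness hL hx.1 hperf hcs1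
    fun i hi => hcs2 i (mem_Icc.mp hi).1 (mem_Icc.mp hi).2
  refine ⟨hvalue, fun x' hx' hperf' => hvalue ▸ hx'.sum_mul_le_dual hL hperf' ?_ ?_ hfeas⟩
  · exact fun i hi => hFflat i (mem_Icc.mp hi).1 (mem_Icc.mp hi).2
  · exact fun i hi => hlam i (mem_Icc.mp hi).1 (mem_Icc.mp hi).2

/-- complementary slackness: a perfect fractional matching whose
support is tight in the dual and which is tight on all flats of the chain attains
the dual value, hence has maximum weight among perfect fractional matchings. -/
theorem stmt_12 (M : Matroid α) [M.RankFinite] (hM : M.Loopless')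
    (L : Finset (Set α)) (hL : ∀ l ∈ L, M.IsLine l)
    (w : Set α → ℝ) (hw : ∀ l ∈ L, 0 ≤ w l)
    (k : ℕ) (F : ℕ → Set α)
    (hFflat : ∀ i, 1 ≤ i → i ≤ k → M.IsFlat (F i))
    (hFmono : ∀ i, 1 ≤ i → i < k → F i ⊂ F (i+1))
    (hFtop : ∀ i, 1 ≤ i → i ≤ k → F i ⊂ M.E)
    (lam : ℕ → ℝ) (hlam : ∀ i, 1 ≤ i → i ≤ k → 0 ≤ lam i) (μ : ℝ)
    (hfeas : ∀ l ∈ L, w l ≤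
      ∑ i ∈ Finset.Icc 1 k, lam i * (deg (F i) l : ℝ) + μ * (deg M.E l : ℝ))
    (x : Set α → ℝ) (hx : IsFracMatching M L x)
    (hperf : 2 * ∑ l ∈ L, x l = (M.rk' M.E : ℝ))
    (hcs1 : ∀ l ∈ L, 0 < x l → w l =
      ∑ i ∈ Finset.Icc 1 k, lam i * (deg (F i) l : ℝ) + μ * (deg M.E l : ℝ))
    (hcs2 : ∀ i, 1 ≤ i → i ≤ k →
      ∑ l ∈ L, (deg (F i) l : ℝ) * x l = (M.rk' (F i) : ℝ)) :
    ∑ l ∈ L, w l * x l =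
      (∑ i ∈ Finset.Icc 1 k, lam i * (M.rk' (F i) : ℝ) + μ * (M.rk' M.E : ℝ)) ∧
    ∀ x' : Set α → ℝ, IsFracMatching M L x' →
      2 * ∑ l ∈ L, x' l = (M.rk' M.E : ℝ) →
      ∑ l ∈ L, w l * x' l ≤ ∑ l ∈ L, w l * x l :=
  stmt_12_general M L hL w k F hFflat lam hlam μ hfeas x hx hperf hcs1 hcs2
end
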